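/- arXiv:2206.07766 — 5 statements merged into one kernel-verified Lean document; each statement's English description precedes it below -/
import Mathlib

section
/- Under square loss, if a predictor f = w∘φ is simultaneously optimal across all environments in ℰ (i.e., for all e₁, e₂ ∈ ℰ and all z in the common support, E_{e₁}[Y | φ(X)=z] = E_{e₂}[Y | φ(X)=z]), and additionally E_{e}[Y²] is identical across environments and the distribution of φ(X) is identical across environments, then the population square losses L_{e₁}(f) and L_{e₂}(f) are equal for all e₁, e₂ ∈ ℰ. -/
/-!
Since `w ∘ φ` is a version of `E[Y | φ(X)]`, Pythagoras in `L²` gives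
`2 L_e(f) = E_e[Y²] - E_e[w(φ(X))²]`. The first term is the same in every environment by
assumption, and the second depends only on the law of `φ(X)`.
-/

open MeasureTheory ProbabilityTheory

theorem integral_sq_sub_eq_of_condExp_ae_eq {Ω : Type*} {m m₀ : MeasurableSpace Ω}
    {μ : Measure[m₀] Ω} [IsFiniteMeasure μ] {X g : Ω → ℝ} (hm : m ≤ m₀) (hX : MemLp X 2 μ)
    (hg : μ[X | m] =ᵐ[μ] g) :
    ∫ ω, (g ω - X ω) ^ 2 ∂μ = ∫ ω, X ω ^ 2 ∂μ - ∫ ω, g ω ^ 2 ∂μ := by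
  have hE : MemLp μ[X | m] 2 μ := hX.condExp one_le_two
  calc ∫ ω, (g ω - X ω) ^ 2 ∂μ
      = ∫ ω, (X ω - μ[X | m] ω) ^ 2 ∂μ :=
        integral_congr_ae (by filter_upwards [hg] with ω hω; rw [← hω]; ring)
    _ = ∫ ω, Var[X; μ | m] ω ∂μ := (integral_condExp hm).symm
    _ = ∫ ω, (μ[X ^ 2 | m] ω - μ[X | m] ω ^ 2) ∂μ :=
        integral_congr_ae (condVar_ae_eq_condExp_sq_sub_sq_condExp hm hX)
    _ = ∫ ω, X ω ^ 2 ∂μ - ∫ ω, μ[X | m] ω ^ 2 ∂μ := by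
        rw [integral_sub integrable_condExp hE.integrable_sq, integral_condExp hm]
        rfl
    _ = ∫ ω, X ω ^ 2 ∂μ - ∫ ω, g ω ^ 2 ∂μ := by
        congr 1
        exact integral_congr_ae (hg.fun_comp (· ^ 2))

theorem integral_comp_eq_of_map_eq {Ω Z : Type*} [MeasurableSpace Ω] [MeasurableSpace Z]
    {μ ν : Measure Ω} {g : Ω → Z} {F : Z → ℝ} (hg : Measurable g)
    (hF : AEStronglyMeasurable F (μ.map g)) (h : μ.map g = ν.map g) :
    ∫ ω, F (g ω) ∂μ = ∫ ω, F (g ω) ∂ν := by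
  rw [← integral_map hg.aemeasurable hF, h, integral_map hg.aemeasurable (h ▸ hF)]

theorem sq_loss_invariant_of_simultaneously_optimal_general
    {X Z E : Type*} [MeasurableSpace X] [MeasurableSpace Z]
    (μ : E → Measure (X × ℝ)) [∀ e, IsProbabilityMeasure (μ e)]
    (φ : X → Z) (w : Z → ℝ) (hφ : Measurable φ) (hw : Measurable w)
    (hY2int : ∀ e, Integrable (fun p : X × ℝ => p.2 ^ 2) (μ e))
    (hopt : ∀ e,
      (μ e)[(fun p : X × ℝ => p.2) |
        MeasurableSpace.comap (fun p : X × ℝ => φ p.1) inferInstance]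
        =ᵐ[μ e] fun p => w (φ p.1))
    (hY2 : ∀ e₁ e₂, ∫ p, p.2 ^ 2 ∂(μ e₁) = ∫ p, p.2 ^ 2 ∂(μ e₂))
    (hφdist : ∀ e₁ e₂,
      Measure.map (fun p : X × ℝ => φ p.1) (μ e₁)
        = Measure.map (fun p : X × ℝ => φ p.1) (μ e₂)) :
    ∀ e₁ e₂,
      ∫ p, (1/2 : ℝ) * (w (φ p.1) - p.2) ^ 2 ∂(μ e₁)
        = ∫ p, (1/2 : ℝ) * (w (φ p.1) - p.2) ^ 2 ∂(μ e₂) := by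
  have hm : MeasurableSpace.comap (fun p : X × ℝ => φ p.1) inferInstance ≤
      Prod.instMeasurableSpace := (hφ.comp measurable_fst).comap_le
  have hloss : ∀ e, ∫ p, (1/2 : ℝ) * (w (φ p.1) - p.2) ^ 2 ∂(μ e)
      = 1/2 * (∫ p, p.2 ^ 2 ∂(μ e) - ∫ p, w (φ p.1) ^ 2 ∂(μ e)) := fun e => by
    have hY : MemLp (fun p : X × ℝ => p.2) 2 (μ e) :=
      (memLp_two_iff_integrable_sq measurable_snd.aestronglyMeasurable).2 (hY2int e)
    rw [integral_const_mul, integral_sq_sub_eq_of_condExp_ae_eq hm hY (hopt e)]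
  intro e₁ e₂
  rw [hloss e₁, hloss e₂, hY2 e₁ e₂, integral_comp_eq_of_map_eq (g := fun p : X × ℝ => φ p.1)
    (F := fun z => w z ^ 2) (hφ.comp measurable_fst) (hw.pow_const 2).aestronglyMeasurable
    (hφdist e₁ e₂)]

/-- Lemma A.1, part (i): under square loss, if `f = w ∘ φ` where `w (φ ·)` is (a
version of) the conditional mean `E_e[Y | φ(X)]` in every environment `e`
(so `f` is simultaneously optimal across environments), and additionally
`E_e[Y²]` is identical across environments and the distribution of `φ(X)` is
identical across environments, then the population square losses
`L_e(f) = E_e[(1/2)(f(X) − Y)²]` agree for all pairs of environments. -/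
theorem sq_loss_invariant_of_simultaneously_optimal
    {X Z E : Type*} [MeasurableSpace X] [MeasurableSpace Z]
    (μ : E → Measure (X × ℝ)) [∀ e, IsProbabilityMeasure (μ e)]
    (φ : X → Z) (w : Z → ℝ) (hφ : Measurable φ) (hw : Measurable w)
    (hY2int : ∀ e, Integrable (fun p : X × ℝ => p.2 ^ 2) (μ e))
    (hlossint : ∀ e, Integrable (fun p : X × ℝ => (w (φ p.1) - p.2) ^ 2) (μ e))
    (hopt : ∀ e,
      (μ e)[(fun p : X × ℝ => p.2) |
        MeasurableSpace.comap (fun p : X × ℝ => φ p.1) inferInstance]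
        =ᵐ[μ e] fun p => w (φ p.1))
    (hY2 : ∀ e₁ e₂, ∫ p, p.2 ^ 2 ∂(μ e₁) = ∫ p, p.2 ^ 2 ∂(μ e₂))
    (hφdist : ∀ e₁ e₂,
      Measure.map (fun p : X × ℝ => φ p.1) (μ e₁)
        = Measure.map (fun p : X × ℝ => φ p.1) (μ e₂)) :
    ∀ e₁ e₂,
      ∫ p, (1/2 : ℝ) * (w (φ p.1) - p.2) ^ 2 ∂(μ e₁)
        = ∫ p, (1/2 : ℝ) * (w (φ p.1) - p.2) ^ 2 ∂(μ e₂) :=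
  sq_loss_invariant_of_simultaneously_optimal_general μ φ w hφ hw hY2int hopt hY2 hφdist
end

section
/- In the two-bit environment under square loss, for a fixed α ∈ (0,1), an odd predictor f with a = f(1,1), b = f(1,−1) satisfies: (i) E_e[f(X)²] and E_e[f(X)Y] identical across all environments e = (α, β_e) with β_e ∈ (0,1), and (ii) E_e[f(X)²] = E_e[f(X)Y] for all e, if and only if either a=b=0 (the zero predictor) or a = b = 1−2α (the IRM-invariant predictor f(x₁,x₂) = (1−2α)·x₁). -/
/-- The probability mass function of `Rad(σ)`: a random variable on `{-1, 1}`
taking the value `-1` with probability `σ` and `+1` with probability `1 - σ`. -/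
noncomputable def rad (σ s : ℝ) : ℝ := if s = -1 then σ else 1 - σ

/-- Expectation of `g Y X₁ X₂` in the two-bit environment `(α, β)`:
`Y = Rad(0.5)`, `X₁ = Y · Rad(α)`, `X₂ = Y · Rad(β)`, all independent. -/
noncomputable def twoBitExp (α β : ℝ) (g : ℝ → ℝ → ℝ → ℝ) : ℝ :=
  ∑ y ∈ ({-1, 1} : Finset ℝ), ∑ n₁ ∈ ({-1, 1} : Finset ℝ), ∑ n₂ ∈ ({-1, 1} : Finset ℝ),
    rad (1/2) y * rad α n₁ * rad β n₂ * g y (y * n₁) (y * n₂)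

/-- The odd predictor on `{-1,1}²` determined by `a = f(1,1) = −f(−1,−1)` and
`b = f(1,−1) = −f(−1,1)`. -/
noncomputable def oddPred (a b x₁ x₂ : ℝ) : ℝ :=
  if x₁ = 1 then (if x₂ = 1 then a else b) else (if x₂ = 1 then -b else -a)

/-- Population square loss `L_e(f) = (1/2)·E^e[(f(X) − Y)²]` of the odd predictor
determined by `a, b` in the two-bit environment `e = (α, β)`. -/
noncomputable def sqLoss (α β a b : ℝ) : ℝ :=
  twoBitExp α β (fun y x₁ x₂ => (1/2) * (oddPred a b x₁ x₂ - y) ^ 2)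

/-! Both moments of an odd predictor are affine in `β`, and the `β`-coefficient of
`E[f(X)Y]` is `b - a`, so invariance across environments forces `a = b`. Then
`f = a · x₁` does not see the spurious bit, and stationarity reads `a² = a(1 - 2α)`. -/

lemma twoBitExp_oddPred_sq (α β a b : ℝ) :
    twoBitExp α β (fun _ x₁ x₂ => (oddPred a b x₁ x₂) ^ 2)
      = a ^ 2 * (1 - α - β + 2 * α * β) + b ^ 2 * (α + β - 2 * α * β) := by
  norm_num [twoBitExp, rad, oddPred]
  ring

lemma twoBitExp_oddPred_mul_label (α β a b : ℝ) :
    twoBitExp α β (fun y x₁ x₂ => oddPred a b x₁ x₂ * y)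
      = a * (1 - α - β) + b * (β - α) := by
  norm_num [twoBitExp, rad, oddPred]
  ring

lemma twoBitExp_oddPred_self_sq (α β a : ℝ) :
    twoBitExp α β (fun _ x₁ x₂ => (oddPred a a x₁ x₂) ^ 2) = a ^ 2 := by
  rw [twoBitExp_oddPred_sq]
  ring

lemma twoBitExp_oddPred_self_mul_label (α β a : ℝ) :
    twoBitExp α β (fun y x₁ x₂ => oddPred a a x₁ x₂ * y) = a * (1 - 2 * α) := by
  rw [twoBitExp_oddPred_mul_label]
  ring

theorem twoBit_sq_vrex_irms_characterization_general (α a b : ℝ) :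
    ((∀ β₁ ∈ Set.Ioo (0 : ℝ) 1, ∀ β₂ ∈ Set.Ioo (0 : ℝ) 1,
        twoBitExp α β₁ (fun _ x₁ x₂ => (oddPred a b x₁ x₂) ^ 2)
          = twoBitExp α β₂ (fun _ x₁ x₂ => (oddPred a b x₁ x₂) ^ 2) ∧
        twoBitExp α β₁ (fun y x₁ x₂ => oddPred a b x₁ x₂ * y)
          = twoBitExp α β₂ (fun y x₁ x₂ => oddPred a b x₁ x₂ * y)) ∧
      (∀ β ∈ Set.Ioo (0 : ℝ) 1,
        twoBitExp α β (fun _ x₁ x₂ => (oddPred a b x₁ x₂) ^ 2)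
          = twoBitExp α β (fun y x₁ x₂ => oddPred a b x₁ x₂ * y)))
    ↔ ((a = 0 ∧ b = 0) ∨ (a = 1 - 2 * α ∧ b = 1 - 2 * α)) := by
  constructor
  · rintro ⟨hinvariant, hstationary⟩
    obtain rfl : a = b := by
      have hcorr := (hinvariant (1 / 4) (by norm_num) (3 / 4) (by norm_num)).2
      rw [twoBitExp_oddPred_mul_label, twoBitExp_oddPred_mul_label] at hcorr
      linarith
    have hfix := hstationary (1 / 2) (by norm_num)
    rw [twoBitExp_oddPred_self_sq, twoBitExp_oddPred_self_mul_label, sq,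
      mul_eq_mul_left_iff] at hfix
    rcases hfix with hinv | hzero
    · exact Or.inr ⟨hinv, hinv⟩
    · exact Or.inl ⟨hzero, hzero⟩
  · rintro (⟨rfl, rfl⟩ | ⟨rfl, rfl⟩) <;>
      refine ⟨fun _ _ _ _ => ?_, fun _ _ => ?_⟩ <;>
      simp only [twoBitExp_oddPred_self_sq, twoBitExp_oddPred_self_mul_label, and_self] <;>
      ring

/-- Two-bit environment, square loss, fixed `α ∈ (0,1)`: an odd predictor with
`a = f(1,1)`, `b = f(1,−1)` satisfies (i) `E_e[f(X)²]` and `E_e[f(X)Y]` are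
identical across all environments `(α, β_e)` with `β_e ∈ (0,1)`, and
(ii) `E_e[f(X)²] = E_e[f(X)Y]` for all such environments, if and only if
either `a = b = 0` (the zero predictor) or `a = b = 1 − 2α` (the IRM-invariant
predictor `f(x₁,x₂) = (1−2α)·x₁`). -/
theorem twoBit_sq_vrex_irms_characterization (α a b : ℝ) (hα : α ∈ Set.Ioo (0 : ℝ) 1) :
    ((∀ β₁ ∈ Set.Ioo (0 : ℝ) 1, ∀ β₂ ∈ Set.Ioo (0 : ℝ) 1,
        twoBitExp α β₁ (fun _ x₁ x₂ => (oddPred a b x₁ x₂) ^ 2)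
          = twoBitExp α β₂ (fun _ x₁ x₂ => (oddPred a b x₁ x₂) ^ 2) ∧
        twoBitExp α β₁ (fun y x₁ x₂ => oddPred a b x₁ x₂ * y)
          = twoBitExp α β₂ (fun y x₁ x₂ => oddPred a b x₁ x₂ * y)) ∧
      (∀ β ∈ Set.Ioo (0 : ℝ) 1,
        twoBitExp α β (fun _ x₁ x₂ => (oddPred a b x₁ x₂) ^ 2)
          = twoBitExp α β (fun y x₁ x₂ => oddPred a b x₁ x₂ * y)))
    ↔ ((a = 0 ∧ b = 0) ∨ (a = 1 - 2 * α ∧ b = 1 - 2 * α)) :=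
  twoBit_sq_vrex_irms_characterization_general α a b
end

section
/- In the two-bit environment under logistic loss with fixed α ∈ (0,1), the set of odd predictors lying in both the V-REx constraint set (equal losses across all environments (α, β_e), β_e ∈ (0,1)) and the IRM-S constraint set (∇_{w|w=1} L_e(w·f) = 0 for all environments) consists of exactly two predictors: the zero predictor f ≡ 0 and f(x₁, x₂) = log((1−α)/α)·x₁. -/
/-- Population logistic loss `L_e(f) = E^e[log(1 + exp(−f(X)·Y))]` of the odd
predictor determined by `a, b` in the two-bit environment `(α, β)`. -/
noncomputable def logLoss (α β a b : ℝ) : ℝ :=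
  twoBitExp α β (fun y x₁ x₂ => Real.log (1 + Real.exp (-(oddPred a b x₁ x₂ * y))))

/-- The IRM-S stationarity quantity `∇_{w|w=1} L_e(w·f)` under logistic loss:
`E^e[−f(X)·Y / (1 + exp(f(X)·Y))]`. -/
noncomputable def logGrad (α β a b : ℝ) : ℝ :=
  twoBitExp α β (fun y x₁ x₂ =>
    -(oddPred a b x₁ x₂ * y) / (1 + Real.exp (oddPred a b x₁ x₂ * y)))

/-!
Both the loss and the IRM-S gradient are affine in `β`. The `β`-slope of the loss is
`χ b - χ a` with `χ t = (1 - α) softplus (-t) - α softplus t` strictly decreasing, so V-REx forces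
`a = b`. For `a = b` the gradient no longer depends on `β` and equals
`a (α eᵃ - (1 - α)) / (1 + eᵃ)`, which vanishes exactly at `a = 0` and `eᵃ = (1 - α) / α`.
-/

open Real Set

noncomputable def softplus (t : ℝ) : ℝ := log (1 + exp t)

lemma strictMono_softplus : StrictMono softplus := fun _ _ h =>
  log_lt_log (by positivity) (by simpa using exp_lt_exp.mpr h)

noncomputable def logLossImbalance (α t : ℝ) : ℝ := (1 - α) * softplus (-t) - α * softplus t

lemma strictAnti_logLossImbalance {α : ℝ} (h₀ : 0 < α) (h₁ : α ≤ 1) :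
    StrictAnti (logLossImbalance α) :=
  ((strictMono_softplus.comp_strictAnti strictMono_id.neg).antitone.const_mul
    (sub_nonneg.mpr h₁)).add_strictAnti (strictMono_softplus.const_mul h₀).neg

lemma logLoss_sub_logLoss (α β₁ β₂ a b : ℝ) :
    logLoss α β₁ a b - logLoss α β₂ a b =
      (β₁ - β₂) * (logLossImbalance α b - logLossImbalance α a) := by
  norm_num [logLoss, logLossImbalance, softplus, twoBitExp, oddPred, rad]
  ring

lemma logGrad_self (α β a : ℝ) :
    logGrad α β a a = a * (α * exp a - (1 - α)) / (1 + exp a) := by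
  norm_num [logGrad, twoBitExp, oddPred, rad, exp_neg]
  field_simp
  ring

lemma logLoss_indep_iff {α a b : ℝ} (h₀ : 0 < α) (h₁ : α ≤ 1) :
    (∀ β₁ ∈ Ioo (0 : ℝ) 1, ∀ β₂ ∈ Ioo (0 : ℝ) 1, logLoss α β₁ a b = logLoss α β₂ a b) ↔
      a = b := by
  constructor
  · intro h
    have hgap := logLoss_sub_logLoss α (1/4) (3/4) a b
    rw [h (1/4) (by norm_num) (3/4) (by norm_num), sub_self] at hgap
    exact ((strictAnti_logLossImbalance h₀ h₁).injective (by linarith)).symm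
  · rintro rfl β₁ - β₂ -
    rw [← sub_eq_zero, logLoss_sub_logLoss, sub_self, mul_zero]

lemma logGrad_self_eq_zero_iff {α : ℝ} (h₀ : 0 < α) (h₁ : α < 1) (β a : ℝ) :
    logGrad α β a a = 0 ↔ a = 0 ∨ a = log ((1 - α) / α) := by
  have hq : 0 < (1 - α) / α := div_pos (sub_pos.2 h₁) h₀
  have hden : 1 + exp a ≠ 0 := by positivity
  have hroot : a = log ((1 - α) / α) ↔ α * exp a = 1 - α := by
    rw [← exp_eq_exp, exp_log hq, eq_div_iff h₀.ne', mul_comm]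
  rw [logGrad_self, div_eq_zero_iff, mul_eq_zero, sub_eq_zero, hroot, or_iff_left hden]

/-- Two-bit environment, logistic loss, fixed `α ∈ (0,1)`: an odd predictor (given
by `a = f(1,1)`, `b = f(1,−1)`) lies in both the V-REx constraint set (equal losses
across all environments `(α, β_e)`, `β_e ∈ (0,1)`) and the IRM-S constraint set
(`∇_{w|w=1} L_e(w·f) = 0` for all such environments) if and only if it is the zero
predictor or `f(x₁,x₂) = log((1−α)/α)·x₁`. -/
theorem twoBit_log_vrex_irms_characterization (α a b : ℝ) (hα : α ∈ Set.Ioo (0 : ℝ) 1) :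
    ((∀ β₁ ∈ Set.Ioo (0 : ℝ) 1, ∀ β₂ ∈ Set.Ioo (0 : ℝ) 1,
        logLoss α β₁ a b = logLoss α β₂ a b) ∧
      (∀ β ∈ Set.Ioo (0 : ℝ) 1, logGrad α β a b = 0))
    ↔ ((a = 0 ∧ b = 0) ∨
        (a = Real.log ((1 - α) / α) ∧ b = Real.log ((1 - α) / α))) := by
  obtain ⟨h₀, h₁⟩ := hα
  rw [logLoss_indep_iff h₀ h₁.le]
  constructor
  · rintro ⟨rfl, hgrad⟩
    rcases (logGrad_self_eq_zero_iff h₀ h₁ (1/2) a).1 (hgrad (1/2) (by norm_num)) with h | h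
    exacts [Or.inl ⟨h, h⟩, Or.inr ⟨h, h⟩]
  · rintro (⟨rfl, rfl⟩ | ⟨rfl, rfl⟩)
    exacts [⟨rfl, fun β _ => (logGrad_self_eq_zero_iff h₀ h₁ β 0).2 (Or.inl rfl)⟩,
      ⟨rfl, fun β _ => (logGrad_self_eq_zero_iff h₀ h₁ β _).2 (Or.inr rfl)⟩]
end

section
/- For the two-bit environment with fixed α ∈ (0,1), if the intersection of constraint sets I_X(ℰ_tr) ∩ I_S(ℰ_tr) is computed using only two training environments ℰ_tr = {(α, β₁), (α, β₂)} with distinct β₁, β₂ ∈ (0,1), then this intersection equals the intersection computed with all environments ℰ = {(α, β): β ∈ (0,1)}. -/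
/-- The IRM-S stationarity quantity `∇_{w|w=1} L_e(w·f)` under square loss:
`E^e[f(X)²] − E^e[f(X)·Y]`. -/
noncomputable def sqGrad (α β a b : ℝ) : ℝ :=
  twoBitExp α β (fun _ x₁ x₂ => (oddPred a b x₁ x₂) ^ 2)
    - twoBitExp α β (fun y x₁ x₂ => oddPred a b x₁ x₂ * y)

/- The losses and gradients below are expectations under a law whose `β`-dependence is only
through the mixing weight of the noise `Rad(β)`, so they are affine in `β`; an affine function
that agrees (or vanishes) at two distinct points is constant (or zero). -/

theorem twoBitExp_affine (α β : ℝ) (g : ℝ → ℝ → ℝ → ℝ) :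
    twoBitExp α β g = (1 - β) * twoBitExp α 0 g + β * twoBitExp α 1 g := by
  simp only [twoBitExp, rad, Finset.sum_insert (by norm_num : (-1 : ℝ) ∉ ({1} : Finset ℝ)),
    Finset.sum_singleton]
  norm_num
  ring

theorem sqGrad_affine (α β a b : ℝ) :
    sqGrad α β a b = (1 - β) * sqGrad α 0 a b + β * sqGrad α 1 a b := by
  simp only [sqGrad]
  rw [twoBitExp_affine α β, twoBitExp_affine α β]
  ring

theorem eq_of_affine_of_eq {f : ℝ → ℝ} (hf : ∀ β, f β = (1 - β) * f 0 + β * f 1)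
    {β₁ β₂ : ℝ} (hne : β₁ ≠ β₂) (h : f β₁ = f β₂) (β β' : ℝ) : f β = f β' := by
  have hslope : (β₁ - β₂) * (f 1 - f 0) = 0 := by
    rw [hf β₁, hf β₂] at h
    linarith
  have h01 : f 1 = f 0 := by
    have := (mul_eq_zero.1 hslope).resolve_left (sub_ne_zero.2 hne)
    linarith
  rw [hf β, hf β', h01]
  ring

theorem twoPoint_iff_forall {S : Set ℝ} {f g : ℝ → ℝ}
    (hf : ∀ β, f β = (1 - β) * f 0 + β * f 1)
    (hg : ∀ β, g β = (1 - β) * g 0 + β * g 1) {β₁ β₂ : ℝ}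
    (hβ₁ : β₁ ∈ S) (hβ₂ : β₂ ∈ S) (hne : β₁ ≠ β₂) :
    (f β₁ = f β₂ ∧ g β₁ = 0 ∧ g β₂ = 0) ↔
      ((∀ β ∈ S, ∀ β' ∈ S, f β = f β') ∧ ∀ β ∈ S, g β = 0) := by
  constructor
  · rintro ⟨hf_eq, hg₁, hg₂⟩
    have hg_const := eq_of_affine_of_eq hg hne (hg₁.trans hg₂.symm)
    exact ⟨fun β _ β' _ => eq_of_affine_of_eq hf hne hf_eq β β',
      fun β _ => (hg_const β β₁).trans hg₁⟩
  · rintro ⟨hf_const, hg_zero⟩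
    exact ⟨hf_const β₁ hβ₁ β₂ hβ₂, hg_zero β₁ hβ₁, hg_zero β₂ hβ₂⟩

theorem twoEnv_constraints_eq_allEnv_constraints_general (α β₁ β₂ a b : ℝ)
    (hβ₁ : β₁ ∈ Set.Ioo (0 : ℝ) 1)
    (hβ₂ : β₂ ∈ Set.Ioo (0 : ℝ) 1) (hne : β₁ ≠ β₂) :
    ((sqLoss α β₁ a b = sqLoss α β₂ a b ∧ sqGrad α β₁ a b = 0 ∧ sqGrad α β₂ a b = 0)
      ↔ ((∀ β ∈ Set.Ioo (0 : ℝ) 1, ∀ β' ∈ Set.Ioo (0 : ℝ) 1,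
            sqLoss α β a b = sqLoss α β' a b) ∧
          (∀ β ∈ Set.Ioo (0 : ℝ) 1, sqGrad α β a b = 0)))
    ∧
    ((logLoss α β₁ a b = logLoss α β₂ a b ∧ logGrad α β₁ a b = 0 ∧ logGrad α β₂ a b = 0)
      ↔ ((∀ β ∈ Set.Ioo (0 : ℝ) 1, ∀ β' ∈ Set.Ioo (0 : ℝ) 1,
            logLoss α β a b = logLoss α β' a b) ∧
          (∀ β ∈ Set.Ioo (0 : ℝ) 1, logGrad α β a b = 0))) := by
  constructor
  · exact twoPoint_iff_forall (fun β => twoBitExp_affine α β _)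
      (fun β => sqGrad_affine α β a b) hβ₁ hβ₂ hne
  · exact twoPoint_iff_forall (fun β => twoBitExp_affine α β _)
      (fun β => twoBitExp_affine α β _) hβ₁ hβ₂ hne

/-- Corollary B.5: for fixed `α ∈ (0,1)` and any two distinct `β₁, β₂ ∈ (0,1)`,
an odd predictor satisfies the V-REx constraint (equal losses) and the IRM-S
constraint (zero stationarity gradient) on the two training environments
`{(α,β₁), (α,β₂)}` if and only if it satisfies them on all environments
`{(α,β) : β ∈ (0,1)}` — both under square loss and under logistic loss. -/
theorem twoEnv_constraints_eq_allEnv_constraints (α β₁ β₂ a b : ℝ)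
    (hα : α ∈ Set.Ioo (0 : ℝ) 1) (hβ₁ : β₁ ∈ Set.Ioo (0 : ℝ) 1)
    (hβ₂ : β₂ ∈ Set.Ioo (0 : ℝ) 1) (hne : β₁ ≠ β₂) :
    ((sqLoss α β₁ a b = sqLoss α β₂ a b ∧ sqGrad α β₁ a b = 0 ∧ sqGrad α β₂ a b = 0)
      ↔ ((∀ β ∈ Set.Ioo (0 : ℝ) 1, ∀ β' ∈ Set.Ioo (0 : ℝ) 1,
            sqLoss α β a b = sqLoss α β' a b) ∧
          (∀ β ∈ Set.Ioo (0 : ℝ) 1, sqGrad α β a b = 0)))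
    ∧
    ((logLoss α β₁ a b = logLoss α β₂ a b ∧ logGrad α β₁ a b = 0 ∧ logGrad α β₂ a b = 0)
      ↔ ((∀ β ∈ Set.Ioo (0 : ℝ) 1, ∀ β' ∈ Set.Ioo (0 : ℝ) 1,
            logLoss α β a b = logLoss α β' a b) ∧
          (∀ β ∈ Set.Ioo (0 : ℝ) 1, logGrad α β a b = 0))) :=
  twoEnv_constraints_eq_allEnv_constraints_general α β₁ β₂ a b hβ₁ hβ₂ hne
end

section
/- Under the δ-gap condition (for every f in the finite hypothesis class F and all i ≠ j, |pᵢLᵢ(f) − pⱼLⱼ(f)| is either ≤ ε − δ or ≥ ε + δ), if the training set is (δ/(4p_max))-representative with respect to all losses, then the population constraint set P^ε = {f : |pᵢLᵢ(f) − pⱼLⱼ(f)| ≤ ε ∀ i≠j} and the empirical constraint set P̂^ε = {f : |pᵢL̂ᵢ(f) − pⱼL̂ⱼ(f)| ≤ ε ∀ i≠j} are equal. -/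
/-! A `δ/(4 p_max)` error on each loss moves every weighted loss `pᵢ Lᵢ(f)` by at most `δ/4`,
hence every weighted gap `|pᵢ Lᵢ(f) − pⱼ Lⱼ(f)|` by at most `δ/2`. Under the `δ`-gap condition no
gap lies within `δ` of the threshold `ε`, so this perturbation cannot move it across `ε`. -/

lemma abs_mul_sub_mul_le_of_le_div {a M x y η : ℝ} (ha : 0 ≤ a) (haM : a ≤ M) (hM : 0 < M)
    (h : |x - y| ≤ η / M) : |a * x - a * y| ≤ η :=
  calc |a * x - a * y| = a * |x - y| := by rw [← mul_sub, abs_mul, abs_of_nonneg ha]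
    _ ≤ M * (η / M) := mul_le_mul haM h (abs_nonneg _) hM.le
    _ = η := mul_div_cancel₀ η hM.ne'

lemma abs_abs_sub_sub_abs_sub_le (a b c d : ℝ) :
    |(|a - b| - |c - d|)| ≤ |a - c| + |b - d| :=
  calc |(|a - b| - |c - d|)| ≤ |(a - b) - (c - d)| := abs_abs_sub_abs_le_abs_sub _ _
    _ = |(a - c) - (b - d)| := by ring_nf
    _ ≤ |a - c| + |b - d| := abs_sub _ _

lemma le_iff_le_of_abs_sub_lt_of_gap {s t ε δ : ℝ} (hgap : s ≤ ε - δ ∨ ε + δ ≤ s)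
    (hst : |s - t| < δ) : s ≤ ε ↔ t ≤ ε := by
  obtain ⟨hlo, hhi⟩ := abs_sub_lt_iff.mp hst
  rcases hgap with hs | hs
  · exact iff_of_true (by linarith) (by linarith)
  · exact iff_of_false (by linarith) (by linarith)

theorem population_eq_empirical_constraint_set_general
    {F I : Type*}
    (L Lhat : I → F → ℝ) (p : I → ℝ) (pmax ε δ : ℝ)
    (hp : ∀ i, 0 < p i) (hpmax : IsGreatest (Set.range p) pmax)
    (hδ : 0 < δ)
    (hgap : ∀ f : F, ∀ i j, i ≠ j →
      |p i * L i f - p j * L j f| ≤ ε - δ ∨ ε + δ ≤ |p i * L i f - p j * L j f|)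
    (hrep : ∀ i, ∀ f : F, |Lhat i f - L i f| ≤ δ / (4 * pmax)) :
    {f : F | ∀ i j, i ≠ j → |p i * L i f - p j * L j f| ≤ ε} =
      {f : F | ∀ i j, i ≠ j → |p i * Lhat i f - p j * Lhat j f| ≤ ε} := by
  obtain ⟨⟨i₀, rfl⟩, hub⟩ := hpmax
  have hweighted : ∀ i f, |p i * L i f - p i * Lhat i f| ≤ δ / 4 := fun i f =>
    abs_mul_sub_mul_le_of_le_div (hp i).le (hub ⟨i, rfl⟩) (hp i₀)
      (by rw [abs_sub_comm, ← div_mul_eq_div_div]; exact hrep i f)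
  ext f
  refine forall₂_congr fun i j => imp_congr_right fun hij =>
    le_iff_le_of_abs_sub_lt_of_gap (hgap f i j hij) ?_
  calc _ ≤ |p i * L i f - p i * Lhat i f| + |p j * L j f - p j * Lhat j f| :=
        abs_abs_sub_sub_abs_sub_le _ _ _ _
    _ ≤ δ / 4 + δ / 4 := add_le_add (hweighted i f) (hweighted j f)
    _ < δ := by linarith

/-- Lemma D.2: under the `δ`-gap condition (for every `f` in the finite hypothesis
class and all `i ≠ j`, `|pᵢLᵢ(f) − pⱼLⱼ(f)|` is either `≤ ε − δ` or `≥ ε + δ`),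
if the training set is `δ/(4·p_max)`-representative with respect to all losses,
then the population constraint set `P^ε` and the empirical constraint set `P̂^ε`
coincide. -/
theorem population_eq_empirical_constraint_set
    {F I : Type*} [Fintype F] [Fintype I] [Nonempty I]
    (L Lhat : I → F → ℝ) (p : I → ℝ) (pmax ε δ : ℝ)
    (hp : ∀ i, 0 < p i) (hpmax : IsGreatest (Set.range p) pmax)
    (hε : 0 < ε) (hδ : 0 < δ)
    (hgap : ∀ f : F, ∀ i j, i ≠ j →
      |p i * L i f - p j * L j f| ≤ ε - δ ∨ ε + δ ≤ |p i * L i f - p j * L j f|)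
    (hrep : ∀ i, ∀ f : F, |Lhat i f - L i f| ≤ δ / (4 * pmax)) :
    {f : F | ∀ i j, i ≠ j → |p i * L i f - p j * L j f| ≤ ε} =
      {f : F | ∀ i j, i ≠ j → |p i * Lhat i f - p j * Lhat j f| ≤ ε} :=
  population_eq_empirical_constraint_set_general L Lhat p pmax ε δ hp hpmax hδ hgap hrep
end
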